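/- arXiv:2306.15331 — 8 statements merged into one kernel-verified Lean document; each statement's English description precedes it below -/
import Mathlib

section
/- Let α ≥ 1, β > 1, and κ ∈ (0, 1/β). Define δ(κ,τ) = ((β/α)*κ - τ/α)/(1 - τ) for τ ≠ 1. Then δ(κ,τ) is strictly decreasing as a function of τ on the interval [M(κ), β*κ], where M(κ) = (β-α)*κ/(1-α*κ) if α < β, M(κ) = 0 if α = β, and M(κ) = (α-β)*κ/(α-1) if α > β. Furthermore, 0 ≤ δ(κ,τ) < 1/α for all τ in [M(κ), β*κ]. -/
noncomputable def Mfun (α β κ : ℝ) : ℝ :=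
  if α < β then (β - α) * κ / (1 - α * κ)
  else if α = β then 0
  else (α - β) * κ / (α - 1)

theorem stmt3 (α β κ : ℝ) (hα : 1 ≤ α) (hβ : 1 < β) (hκ0 : 0 < κ) (hκ : κ < 1 / β) :
    StrictAntiOn (fun τ : ℝ => ((β / α) * κ - τ / α) / (1 - τ))
      (Set.Icc (Mfun α β κ) (β * κ)) ∧
    ∀ τ ∈ Set.Icc (Mfun α β κ) (β * κ),
      0 ≤ ((β / α) * κ - τ / α) / (1 - τ) ∧ ((β / α) * κ - τ / α) / (1 - τ) < 1 / α := by
  have hα0 : (0:ℝ) < α := lt_of_lt_of_le one_pos hα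
  have hβ0 : (0:ℝ) < β := lt_trans one_pos hβ
  have hβκ : β * κ < 1 := by
    have := (lt_div_iff₀ hβ0).mp hκ
    nlinarith
  constructor
  · intro a ha b hb hab
    have ha1 : 1 - a > 0 := by have := ha.2; linarith
    have hb1 : 1 - b > 0 := by have := hb.2; linarith
    simp only
    rw [div_lt_div_iff₀ hb1 ha1]
    have e1 : ((β / α) * κ - b / α) = (β * κ - b) / α := by ring
    have e2 : ((β / α) * κ - a / α) = (β * κ - a) / α := by ring
    rw [e1, e2, div_mul_eq_mul_div, div_mul_eq_mul_div, div_lt_div_iff₀ hα0 hα0]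
    nlinarith [mul_pos hα0 (mul_pos (show (0:ℝ) < 1 - β * κ by linarith) (show (0:ℝ) < b - a by linarith))]
  · intro τ hτ
    have h1 : 1 - τ > 0 := by have := hτ.2; linarith
    have hnum : 0 ≤ (β / α) * κ - τ / α := by
      have e : (β / α) * κ - τ / α = (β * κ - τ) / α := by ring
      rw [e]
      exact div_nonneg (by linarith [hτ.2]) hα0.le
    refine ⟨div_nonneg hnum h1.le, ?_⟩
    rw [div_lt_div_iff₀ h1 hα0]
    have key : ((β / α) * κ - τ / α) * α = β * κ - τ := by field_simp
    rw [key]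
    linarith
end

section
/- Let α ≥ 1, β > 1 with α ≠ β, κ ∈ (0, 1/β), and τ ∈ (M(κ), β*κ), where M(κ) = (β-α)*κ/(1-α*κ) if α < β and M(κ) = (α-β)*κ/(α-1) if α > β. Define γ(κ,τ) = (1 - β/α)*(κ/τ) + 1/α and δ(κ,τ) = ((β/α)*κ - τ/α)/(1-τ). Then γ(κ,τ) > δ(κ,τ). -/
theorem stmt6 (α β κ τ : ℝ) (hα : 1 ≤ α) (hβ : 1 < β) (hne : α ≠ β)
    (hκ0 : 0 < κ) (hκ : κ < 1 / β)
    (hτ : τ ∈ Set.Ioo (Mfun α β κ) (β * κ)) :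
    ((β / α) * κ - τ / α) / (1 - τ) < (1 - β / α) * (κ / τ) + 1 / α := by
  obtain ⟨hτ1, hτ2⟩ := hτ
  have hβ0 : (0:ℝ) < β := by linarith
  have hβκ : β * κ < 1 := by
    have := (lt_div_iff₀ hβ0).mp hκ; linarith
  have hα0 : (0:ℝ) < α := by linarith
  have h1τ : 0 < 1 - τ := by linarith
  have hτ0 : 0 < τ := by
    rcases lt_trichotomy α β with h | h | h
    · have h1 : 0 < 1 - α * κ := by nlinarith
      have : 0 < (β - α) * κ / (1 - α * κ) := by
        apply div_pos; nlinarith; exact h1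
      simp only [Mfun, if_pos h] at hτ1; linarith
    · exact absurd h hne
    · have h1 : 0 < α - 1 := by linarith
      have : 0 < (α - β) * κ / (α - 1) := by
        apply div_pos; nlinarith; linarith
      simp only [Mfun, if_neg (not_lt.mpr h.le), if_neg (ne_of_gt h)] at hτ1
      linarith
  have hA : 0 < (α - β) * κ + τ * (1 - α * κ) := by
    rcases lt_trichotomy α β with h | h | h
    · have h1 : 0 < 1 - α * κ := by nlinarith
      simp only [Mfun, if_pos h] at hτ1
      have := (div_lt_iff₀ h1).mp hτ1
      nlinarith
    · exact absurd h hne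
    · rcases le_or_gt (α * κ) 1 with h2 | h2
      · nlinarith
      · nlinarith [mul_pos (sub_pos.mpr hτ2) (sub_pos.mpr h2),
          mul_pos hκ0 (sub_pos.mpr hβκ)]
  have heq : (1 - β / α) * (κ / τ) + 1 / α - ((β / α) * κ - τ / α) / (1 - τ)
      = ((α - β) * κ + τ * (1 - α * κ)) / (α * τ * (1 - τ)) := by
    field_simp
    ring
  have hpos : 0 < ((α - β) * κ + τ * (1 - α * κ)) / (α * τ * (1 - τ)) := by
    apply div_pos hA; positivity
  linarith [heq ▸ hpos]
end

section
/- Let α, β ≥ 1, n > 0, and 0 ≤ k ≤ n/β. Then M*·k ≤ M(k/n)·n ≤ β·k, where M* = 0 if α ≤ β and M* = (α-β)/(α-1) if α > β, and M(κ) = (β-α)·κ/(1-α·κ) if α < β, M(κ) = 0 if α = β, and M(κ) = (α-β)·κ/(α-1) if α > β. -/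
theorem stmt8 (α β n k : ℝ) (hα : 1 ≤ α) (hβ : 1 ≤ β) (hn : 0 < n)
    (hk0 : 0 ≤ k) (hk : k ≤ n / β) :
    (if α ≤ β then 0 else (α - β) / (α - 1)) * k ≤ Mfun α β (k / n) * n ∧
    Mfun α β (k / n) * n ≤ β * k := by
  have hβ0 : (0:ℝ) < β := by linarith
  have hkn : k * β ≤ n := by
    have := (le_div_iff₀ hβ0).mp hk
    linarith
  unfold Mfun
  rcases lt_trichotomy α β with h | h | h
  · have hle : α ≤ β := le_of_lt h
    simp only [if_pos h, if_pos hle]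
    have hden : 0 < 1 - α * (k / n) := by
      have h1 : α * k ≤ β * k := by nlinarith
      have h2 : α * (k / n) < 1 := by
        rw [mul_div_assoc', div_lt_one hn]
        nlinarith
      linarith
    constructor
    · have : 0 ≤ (β - α) * (k / n) / (1 - α * (k / n)) := by
        apply div_nonneg
        · exact mul_nonneg (by linarith) (div_nonneg hk0 hn.le)
        · linarith
      nlinarith
    · rw [div_mul_eq_mul_div, div_le_iff₀ hden]
      have hkd : k / n * n = k := div_mul_cancel₀ k hn.ne'
      have hknn : 0 ≤ k / n := div_nonneg hk0 hn.le
      have hkn1 : k / n * β ≤ 1 := by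
        rw [div_mul_eq_mul_div, div_le_one hn]; linarith
      nlinarith [mul_nonneg hk0 (sub_nonneg.mpr hkn1)]
  · subst h
    simp [lt_irrefl, mul_nonneg hβ0.le hk0]
  · have h1 : ¬ α < β := not_lt.mpr h.le
    have h2 : ¬ α = β := ne_of_gt h
    have h3 : ¬ α ≤ β := not_le.mpr h
    simp only [if_neg h1, if_neg h2, if_neg h3]
    have hα1 : 0 < α - 1 := by linarith
    have heq : (α - β) * (k / n) / (α - 1) * n = (α - β) / (α - 1) * k := by
      field_simp
    rw [heq]
    constructor
    · exact le_refl _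
    · have key : (α - β) / (α - 1) ≤ β := by
        rw [div_le_iff₀ hα1]; nlinarith
      exact mul_le_mul_of_nonneg_right key hk0
end

section
/- Let α, β ≥ 1, n > 0, 0 ≤ k ≤ n/β, and M*·k ≤ t ≤ β·k with M* as below. Define x(k,t) = (1 - β/α)·k + t/α. Then x(k,t) ≥ k·t/n if and only if t ≥ M(k/n)·n, where M(κ) = (β-α)·κ/(1-α·κ) if α < β, M(κ) = 0 if α = β, and M(κ) = (α-β)·κ/(α-1) if α > β, and M* = 0 if α ≤ β, M* = (α-β)/(α-1) if α > β. -/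
theorem stmt9 (α β n k t : ℝ) (hα : 1 ≤ α) (hβ : 1 ≤ β) (hn : 0 < n)
    (hk0 : 0 ≤ k) (hk : k ≤ n / β)
    (hM : (if α ≤ β then 0 else (α - β) / (α - 1)) * k ≤ t) (ht : t ≤ β * k) :
    (1 - β / α) * k + t / α ≥ k * t / n ↔ t ≥ Mfun α β (k / n) * n := by
  have hα0 : (0:ℝ) < α := by linarith
  have hβ0 : (0:ℝ) < β := by linarith
  have hβk : β * k ≤ n := by
    have := (le_div_iff₀ hβ0).mp hk
    linarith
  have hq0 : 0 ≤ k / n := div_nonneg hk0 hn.le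
  have hmain : ((1 - β / α) * k + t / α ≥ k * t / n) ↔ ((β - α) * k * n ≤ t * (n - α * k)) := by
    have h1 : (1 - β / α) * k + t / α = ((α - β) * k + t) / α := by
      field_simp
    rw [h1, ge_iff_le, div_le_div_iff₀ hn hα0]
    constructor <;> intro h <;> nlinarith [h]
  rcases lt_trichotomy α β with h | h | h
  · -- α < β
    have hd : 0 < 1 - α * (k / n) := by
      have hq1 : β * (k / n) ≤ 1 := by
        rw [mul_div_assoc']
        exact div_le_one_of_le₀ hβk hn.le
      rcases eq_or_lt_of_le hq0 with h0 | h0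
      · rw [← h0]; norm_num
      · nlinarith
    rw [hmain, Mfun, if_pos h, ge_iff_le, div_mul_eq_mul_div, div_le_iff₀ hd]
    have e1 : (β - α) * (k / n) * n = (β - α) * k := by field_simp
    have e2 : t * (1 - α * (k / n)) = t * (n - α * k) / n := by field_simp
    rw [e1, e2, le_div_iff₀ hn]
  · -- α = β
    subst h
    have ht0 : 0 ≤ t := by
      have := hM; simp at this; nlinarith
    rw [hmain, Mfun, if_neg (lt_irrefl α), if_pos rfl]
    constructor <;> intro _
    · simpa using ht0
    · nlinarith [mul_nonneg ht0 (by linarith : (0:ℝ) ≤ n - α * k)]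
  · -- α > β
    have hα1 : 1 < α := by linarith
    have hM' : (α - β) / (α - 1) * k ≤ t := by
      have : ¬ α ≤ β := not_le.mpr h
      simpa [this] using hM
    have ht0 : 0 ≤ t := by
      have : 0 ≤ (α - β) / (α - 1) * k :=
        mul_nonneg (div_nonneg (by linarith) (by linarith)) hk0
      linarith
    rw [hmain, Mfun, if_neg (not_lt.mpr h.le), if_neg (ne_of_gt h)]
    have eR : (α - β) * (k / n) / (α - 1) * n = (α - β) / (α - 1) * k := by
      have h1 : α - 1 ≠ 0 := by linarith
      field_simp
    constructor <;> intro _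
    · rw [ge_iff_le, eR]; exact hM'
    · rcases le_or_gt (α * k) n with hc | hc
      · nlinarith [mul_nonneg ht0 (by linarith : (0:ℝ) ≤ n - α * k),
          mul_nonneg hk0 hn.le]
      · nlinarith [mul_nonneg (by linarith : (0:ℝ) ≤ β * k - t) (by linarith : (0:ℝ) ≤ α * k - n),
          mul_nonneg (mul_nonneg hα0.le hk0) (by linarith : (0:ℝ) ≤ n - β * k)]
end

section
/- For β > 1, define ξ(κ) = -β·H(1/β)·κ + H(κ) for κ ∈ [0, 1/β], where H is the binary entropy function. Then the maximum of ξ over [0, 1/β] equals ln(1 + exp(-β·H(1/β))). -/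
noncomputable def binEnt (x : ℝ) : ℝ := -x * Real.log x - (1 - x) * Real.log (1 - x)

/-!
The function `κ ↦ a κ + H(κ)` is maximised over `[0, 1]` at `q = sigmoid a`, with maximum
`log (1 + exp a)`: since `log q = a - log (1 + exp a)` and `log (1 - q) = -log (1 + exp a)`,
Gibbs' inequality `H(κ) ≤ -κ log q - (1 - κ) log (1 - q)` bounds `a κ + H(κ)` by exactly this
value. For `a = -β H(1/β)` the maximiser lies in `[0, 1/β]`, because `β H(1/β) ≥ log β`.
-/

open Real Set

lemma mul_log_sub_mul_log_le {x y : ℝ} (hx : 0 ≤ x) (hy : 0 < y) :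
    x * log y - x * log x ≤ y - x := by
  rcases hx.eq_or_lt with rfl | hx
  · simpa using hy.le
  calc x * log y - x * log x = x * log (y / x) := by rw [log_div hy.ne' hx.ne']; ring
    _ ≤ x * (y / x - 1) := mul_le_mul_of_nonneg_left (log_le_sub_one_of_pos (by positivity)) hx.le
    _ = y - x := by field_simp

lemma binEnt_le_cross_entropy {κ q : ℝ} (hκ₀ : 0 ≤ κ) (hκ₁ : κ ≤ 1) (hq₀ : 0 < q) (hq₁ : q < 1) :
    binEnt κ ≤ -κ * log q - (1 - κ) * log (1 - q) := by
  have h₀ := mul_log_sub_mul_log_le hκ₀ hq₀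
  have h₁ := mul_log_sub_mul_log_le (sub_nonneg.2 hκ₁) (sub_pos.2 hq₁)
  rw [binEnt]
  linarith

lemma log_sigmoid (a : ℝ) : log (sigmoid a) = a - log (1 + exp a) := by
  have h : sigmoid a = sigmoid (-a) * exp a := by simpa using (sigmoid_mul_rexp_neg (-a)).symm
  rw [h, log_mul (sigmoid_pos _).ne' (exp_pos a).ne', log_exp, sigmoid_def, neg_neg, log_inv]
  ring

lemma log_one_sub_sigmoid (a : ℝ) : log (1 - sigmoid a) = -log (1 + exp a) := by
  rw [← sigmoid_neg, sigmoid_def, neg_neg, log_inv]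

lemma mul_add_binEnt_sigmoid (a : ℝ) :
    a * sigmoid a + binEnt (sigmoid a) = log (1 + exp a) := by
  rw [binEnt, log_sigmoid, log_one_sub_sigmoid]
  ring

lemma mul_add_binEnt_le {a κ : ℝ} (hκ₀ : 0 ≤ κ) (hκ₁ : κ ≤ 1) :
    a * κ + binEnt κ ≤ log (1 + exp a) := by
  have h := binEnt_le_cross_entropy hκ₀ hκ₁ (sigmoid_pos a) (sigmoid_lt_one a)
  rw [log_sigmoid, log_one_sub_sigmoid] at h
  linarith

lemma isGreatest_mul_add_binEnt_image {a : ℝ} {s : Set ℝ} (hs : s ⊆ Icc 0 1)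
    (ha : sigmoid a ∈ s) :
    IsGreatest ((fun κ => a * κ + binEnt κ) '' s) (log (1 + exp a)) := by
  refine ⟨⟨sigmoid a, ha, mul_add_binEnt_sigmoid a⟩, ?_⟩
  rintro _ ⟨κ, hκ, rfl⟩
  exact mul_add_binEnt_le (hs hκ).1 (hs hκ).2

lemma log_le_mul_binEnt_one_div {β : ℝ} (hβ : 1 ≤ β) : log β ≤ β * binEnt (1 / β) := by
  have hβ₀ : 0 < β := by linarith
  have h : log (1 - 1 / β) ≤ 0 :=
    log_nonpos (sub_nonneg.2 ((div_le_one hβ₀).2 hβ)) (by simp [hβ₀.le])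
  have hβ' : β * binEnt (1 / β) = log β - (β - 1) * log (1 - 1 / β) := by
    rw [binEnt, one_div, log_inv]
    field_simp
  linarith [mul_nonpos_of_nonneg_of_nonpos (sub_nonneg.2 hβ) h]

theorem stmt11 (β : ℝ) (hβ : 1 < β) :
    IsGreatest ((fun κ : ℝ => -β * binEnt (1 / β) * κ + binEnt κ) '' Set.Icc 0 (1 / β))
      (Real.log (1 + Real.exp (-β * binEnt (1 / β)))) := by
  have hβ₀ : 0 < β := by linarith
  have h_le_exp : β ≤ exp (β * binEnt (1 / β)) :=
    (log_le_iff_le_exp hβ₀).1 (log_le_mul_binEnt_one_div hβ.le)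
  refine isGreatest_mul_add_binEnt_image
    (Icc_subset_Icc_right ((div_le_one hβ₀).2 hβ.le)) ⟨(sigmoid_pos _).le, ?_⟩
  rw [sigmoid_def, neg_mul, neg_neg, ← one_div]
  exact one_div_le_one_div_of_le hβ₀ (by linarith [exp_pos (β * binEnt (1 / β))])
end

section
/- For every α > 1 and every x with 1/α ≤ x < 1, the inequality D(1/α ‖ x/(2αx - 1)) ≤ D(1/α ‖ x) holds, where D(a‖b) = a·ln(a/b) + (1-a)·ln((1-a)/(1-b)) is the KL divergence between Bernoulli distributions. -/
/-!
With `y = x / (2αx - 1)` one has `x / y = 2αx - 1` and `1 - y = ((2α - 1)x - 1) / (2αx - 1)`, so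
`D(1/α ‖ x) - D(1/α ‖ y)` is the explicit function `klGap α x`. It vanishes at `x = 1/α`, and its
derivative `2(2α - 1)(αx - 1)² / (α((2α - 1)x - 1)(1 - x)(2αx - 1))` is nonnegative on `[1/α, 1)`.
-/

noncomputable def klBer (a b : ℝ) : ℝ :=
  a * Real.log (a / b) + (1 - a) * Real.log ((1 - a) / (1 - b))

open Real Set

lemma klBer_sub_klBer {a b c : ℝ} (ha : a ≠ 0) (ha' : 1 - a ≠ 0) (hb : b ≠ 0) (hb' : 1 - b ≠ 0)
    (hc : c ≠ 0) (hc' : 1 - c ≠ 0) :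
    klBer a b - klBer a c = a * (log c - log b) + (1 - a) * (log (1 - c) - log (1 - b)) := by
  unfold klBer
  rw [log_div ha hb, log_div ha hc, log_div ha' hb', log_div ha' hc']
  ring

noncomputable def klGap (α t : ℝ) : ℝ :=
  (1 - 1 / α) * (log ((2 * α - 1) * t - 1) - log (1 - t)) - log (2 * α * t - 1)

section
variable {α t : ℝ}

lemma klGap_factors_pos (hαt : 1 ≤ α * t) (ht : t < 1) :
    0 < (2 * α - 1) * t - 1 ∧ 0 < 1 - t ∧ 0 < 2 * α * t - 1 :=
  ⟨by linarith, by linarith, by linarith⟩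

lemma hasDerivAt_klGap (hα : α ≠ 0) (hαt : 1 ≤ α * t) (ht : t < 1) :
    HasDerivAt (klGap α)
      (2 * (2 * α - 1) * (α * t - 1) ^ 2 /
        (α * ((2 * α - 1) * t - 1) * (1 - t) * (2 * α * t - 1))) t := by
  obtain ⟨hv, hw, hu⟩ := klGap_factors_pos hαt ht
  have dv : HasDerivAt (fun s : ℝ => (2 * α - 1) * s - 1) (2 * α - 1) t := by
    simpa using ((hasDerivAt_id t).const_mul (2 * α - 1)).sub_const 1
  have dw : HasDerivAt (fun s : ℝ => 1 - s) (-1) t := by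
    simpa using (hasDerivAt_id t).const_sub 1
  have du : HasDerivAt (fun s : ℝ => 2 * α * s - 1) (2 * α) t := by
    simpa using ((hasDerivAt_id t).const_mul (2 * α)).sub_const 1
  refine ((((dv.log hv.ne').sub (dw.log hw.ne')).const_mul (1 - 1 / α)).sub
    (du.log hu.ne')).congr_deriv ?_
  rw [one_sub_div hα, div_sub_div _ _ hv.ne' hw.ne', div_mul_div_comm,
    div_sub_div _ _ (by positivity) hu.ne', div_eq_div_iff (by positivity) (by positivity)]
  ring

lemma klGap_one_div (hα : α ≠ 0) : klGap α (1 / α) = 0 := by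
  have hv : (2 * α - 1) * (1 / α) - 1 = 1 - 1 / α := by field_simp; ring
  have hu : 2 * α * (1 / α) - 1 = 1 := by field_simp; norm_num
  rw [klGap, hv, hu, log_one]
  ring

lemma monotoneOn_klGap (hα : 1 < α) : MonotoneOn (klGap α) (Ico (1 / α) 1) := by
  have hα0 : 0 < α := by linarith
  have hderiv : ∀ s ∈ Ico (1 / α) 1, HasDerivAt (klGap α)
      (2 * (2 * α - 1) * (α * s - 1) ^ 2 /
        (α * ((2 * α - 1) * s - 1) * (1 - s) * (2 * α * s - 1))) s := fun s hs =>
    hasDerivAt_klGap hα0.ne' ((div_le_iff₀' hα0).mp hs.1) hs.2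
  refine monotoneOn_of_hasDerivWithinAt_nonneg (convex_Ico _ _)
    (fun s hs => (hderiv s hs).continuousAt.continuousWithinAt)
    (fun s hs => (hderiv s (interior_subset hs)).hasDerivWithinAt) fun s hs => ?_
  rw [interior_Ico] at hs
  obtain ⟨hv, hw, hu⟩ := klGap_factors_pos ((div_le_iff₀' hα0).mp hs.1.le) hs.2
  have hnum : 0 ≤ 2 * (2 * α - 1) * (α * s - 1) ^ 2 := by
    have : 0 < 2 * α - 1 := by linarith
    positivity
  exact div_nonneg hnum (mul_pos (mul_pos (mul_pos hα0 hv) hw) hu).le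

end

theorem stmt13 (α x : ℝ) (hα : 1 < α) (hx1 : 1 / α ≤ x) (hx2 : x < 1) :
    klBer (1 / α) (x / (2 * α * x - 1)) ≤ klBer (1 / α) x := by
  have hα0 : 0 < α := by linarith
  have hαx : 1 ≤ α * x := (div_le_iff₀' hα0).mp hx1
  obtain ⟨hv, hw, hu⟩ := klGap_factors_pos hαx hx2
  have hx0 : 0 < x := lt_of_lt_of_le (by positivity) hx1
  have ha' : 1 - 1 / α ≠ 0 := by
    have : 1 / α < 1 := (div_lt_one hα0).mpr hα
    linarith
  have hy' : 1 - x / (2 * α * x - 1) = ((2 * α - 1) * x - 1) / (2 * α * x - 1) := by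
    rw [eq_div_iff hu.ne', sub_mul, div_mul_cancel₀ _ hu.ne']
    ring
  have hgap : klBer (1 / α) x - klBer (1 / α) (x / (2 * α * x - 1)) = klGap α x := by
    rw [klBer_sub_klBer (by positivity) ha' hx0.ne' hw.ne' (div_pos hx0 hu).ne'
      (hy' ▸ (div_pos hv hu).ne'), hy', log_div hx0.ne' hu.ne', log_div hv.ne' hu.ne', klGap]
    ring
  have hmono := monotoneOn_klGap hα ⟨le_rfl, by linarith⟩ ⟨hx1, hx2⟩ hx1
  rw [klGap_one_div hα0.ne'] at hmono
  linarith
end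

section
/- Let c ≥ 1, α ≥ 1, β > 1, κ ∈ [0, 1/β], and τ ∈ [M(κ), β·κ] with 0 ≤ τ < 1 (where M(κ) is as defined below). Define γ(κ,τ), δ(κ,τ) with the conventions γ(κ,0) = 1/α and δ as given, and g(κ,τ) = ((β·κ - τ)/α)·ln c - τ·H(γ(κ,τ)) - (1-τ)·H(δ(κ,τ)) + H(κ). Then g(κ,τ) ≥ 0. -/
lemma binEnt_eq (x : ℝ) : binEnt x = Real.binEntropy x := by
  simp [binEnt, Real.binEntropy, Real.log_inv]; ring

lemma binEnt_concave {x y a b : ℝ} (hx0 : 0 ≤ x) (hx1 : x ≤ 1) (hy0 : 0 ≤ y) (hy1 : y ≤ 1)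
    (ha : 0 ≤ a) (hb : 0 ≤ b) (hab : a + b = 1) :
    a * binEnt x + b * binEnt y ≤ binEnt (a * x + b * y) := by
  simp only [binEnt_eq]
  have := Real.strictConcave_binEntropy.concaveOn.2 (x := x) (y := y)
    (Set.mem_Icc.2 ⟨hx0, hx1⟩) (Set.mem_Icc.2 ⟨hy0, hy1⟩) ha hb hab
  simpa using this

set_option maxHeartbeats 1000000 in
theorem stmt18 (α β c κ τ : ℝ) (hc : 1 ≤ c) (hα : 1 ≤ α) (hβ : 1 < β)
    (hκ0 : 0 ≤ κ) (hκ : κ ≤ 1 / β)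
    (hτM : Mfun α β κ ≤ τ) (hτβ : τ ≤ β * κ) (hτ0 : 0 ≤ τ) (hτ1 : τ < 1) :
    0 ≤ ((β * κ - τ) / α) * Real.log c
        - τ * binEnt (if τ = 0 then 1 / α else (1 - β / α) * (κ / τ) + 1 / α)
        - (1 - τ) * binEnt (if τ = 1 then 1 / α else ((β / α) * κ - τ / α) / (1 - τ))
        + binEnt κ := by
  have hα0 : (0:ℝ) < α := lt_of_lt_of_le one_pos hα
  have hβ0 : (0:ℝ) < β := lt_trans one_pos hβ
  have hβκ1 : β * κ ≤ 1 := by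
    rw [div_eq_inv_mul] at hκ
    calc β * κ ≤ β * (β⁻¹ * 1) := by
          apply mul_le_mul_of_nonneg_left _ hβ0.le; simpa using hκ
      _ = 1 := by field_simp
  have hτ1' : (0:ℝ) < 1 - τ := by linarith
  have hlogc : 0 ≤ Real.log c := Real.log_nonneg hc
  have hfirst : 0 ≤ ((β * κ - τ) / α) * Real.log c :=
    mul_nonneg (div_nonneg (by linarith) hα0.le) hlogc
  rw [if_neg hτ1.ne]
  rcases eq_or_ne τ 0 with h0 | h0
  · subst h0
    simp only [if_pos rfl, mul_zero, zero_mul, sub_zero, zero_div, sub_zero, one_mul]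
    have hδκ : binEnt ((β / α) * κ / 1) = binEnt κ := by
      rcases hκ0.eq_or_lt with hk | hk
      · rw [← hk]; norm_num
      · -- κ > 0; show α = β using Mfun ≤ 0
        have hab : α = β := by
          by_contra hne
          rcases lt_or_gt_of_ne hne with hlt | hgt
          · have h1 : 0 < 1 - α * κ := by nlinarith
            have : 0 < (β - α) * κ / (1 - α * κ) := div_pos (by nlinarith) h1
            rw [Mfun, if_pos hlt] at hτM; linarith
          · have : 0 < (α - β) * κ / (α - 1) := by
              apply div_pos (by nlinarith) (by linarith)
            rw [Mfun, if_neg (by linarith), if_neg (by linarith)] at hτM; linarith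
        rw [hab]; norm_num; congr 1; field_simp
    rw [hδκ]
    have h2 : 0 ≤ β * κ / α * Real.log c :=
      mul_nonneg (div_nonneg (by linarith) hα0.le) hlogc
    linarith
  · rw [if_neg h0]
    have hτpos : 0 < τ := lt_of_le_of_ne hτ0 (Ne.symm h0)
    set γ : ℝ := (1 - β / α) * (κ / τ) + 1 / α with hγdef
    set δ : ℝ := ((β / α) * κ - τ / α) / (1 - τ) with hδdef
    have hγform : γ = ((α - β) * κ + τ) / (α * τ) := by
      rw [hγdef]; field_simp
    have hnum0 : 0 ≤ (α - β) * κ + τ := by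
      rcases le_or_gt β α with hab | hab
      · nlinarith
      · rcases hκ0.eq_or_lt with hk | hk
        · nlinarith
        · rw [Mfun, if_pos hab] at hτM
          have h1 : 0 < 1 - α * κ := by nlinarith
          rw [div_le_iff₀ h1] at hτM
          nlinarith
    have hγ0 : 0 ≤ γ := by
      rw [hγform]; exact div_nonneg hnum0 (by positivity)
    have hγ1 : γ ≤ 1 := by
      rw [hγform, div_le_one (by positivity)]
      rcases le_or_gt α β with hab | hab
      · nlinarith
      · rw [Mfun, if_neg (by linarith), if_neg (by linarith)] at hτM
        rw [div_le_iff₀ (by linarith : (0:ℝ) < α - 1)] at hτM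
        nlinarith
    have hδform : δ = (β * κ - τ) / (α * (1 - τ)) := by
      rw [hδdef, div_eq_div_iff hτ1'.ne' (mul_pos hα0 hτ1').ne']; field_simp
    have hδ0 : 0 ≤ δ := by
      rw [hδform]; exact div_nonneg (by linarith) (mul_pos hα0 hτ1').le
    have hδ1 : δ ≤ 1 := by
      rw [hδform, div_le_one (mul_pos hα0 hτ1')]
      nlinarith
    have hsum : τ * γ + (1 - τ) * δ = κ := by
      rw [hγdef, hδdef]; field_simp; ring
    have hconc := binEnt_concave hγ0 hγ1 hδ0 hδ1 hτ0 hτ1'.le (by ring)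
    rw [hsum] at hconc
    linarith
end

section
/- Let α > 1, c > 1, and let δ* ∈ (0, 1/α) be the unique value satisfying D(1/α ‖ δ*) = (ln c)/α. Define κ* = c·δ*/(1 + δ*·(c-1)). Then δ* < κ* < 1/α, the derivative condition ln c = ln((κ*/(1-κ*))·((1-δ*)/δ*)) holds, and κ*·ln c - D(κ* ‖ δ*) = ln(1 + (c-1)·δ*). -/
/-!
Tilting the Bernoulli(δ) law by the weight `c ^ x` gives the Bernoulli(κ*) law, with normalising
constant `1 + (c - 1) δ`; this yields the odds identity and the value of `κ ln c - D(κ ‖ δ)` at `κ = κ*`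
by direct computation. For `κ* < p := 1/α`, write `B = ln((1 - δ)/(1 - p)) > 0`: the defining equation
reads `p ln c = p ln(p/δ) + p B - B`, so `ln c < ln(p/δ) + B`, i.e. `c` is below the odds ratio of `p`
against `δ`, which is exactly the condition `κ* < p`.
-/

open Real

section Tilt

variable {c δ : ℝ}

lemma tilt_denom_pos (hc : 0 < c) (hδ0 : 0 < δ) (hδ1 : δ < 1) : 0 < 1 + δ * (c - 1) := by
  nlinarith

lemma one_sub_tilt (hc : 0 < c) (hδ0 : 0 < δ) (hδ1 : δ < 1) :
    1 - c * δ / (1 + δ * (c - 1)) = (1 - δ) / (1 + δ * (c - 1)) := by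
  have := tilt_denom_pos hc hδ0 hδ1
  field_simp
  ring

lemma lt_tilt (hc : 1 < c) (hδ0 : 0 < δ) (hδ1 : δ < 1) : δ < c * δ / (1 + δ * (c - 1)) := by
  rw [lt_div_iff₀ (tilt_denom_pos (by linarith) hδ0 hδ1)]
  nlinarith [mul_pos (mul_pos hδ0 (sub_pos.2 hc)) (sub_pos.2 hδ1)]

lemma tilt_lt_iff {p : ℝ} (hc : 0 < c) (hδ0 : 0 < δ) (hδ1 : δ < 1) (hp1 : p < 1) :
    c * δ / (1 + δ * (c - 1)) < p ↔ c < p / (1 - p) * ((1 - δ) / δ) := by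
  have hp : 0 < 1 - p := sub_pos.2 hp1
  rw [div_lt_iff₀ (tilt_denom_pos hc hδ0 hδ1), div_mul_div_comm, lt_div_iff₀ (by positivity)]
  constructor <;> intro h <;> nlinarith

lemma tilt_odds_mul_inv_odds (hc : 0 < c) (hδ0 : 0 < δ) (hδ1 : δ < 1) :
    c * δ / (1 + δ * (c - 1)) / (1 - c * δ / (1 + δ * (c - 1))) * ((1 - δ) / δ) = c := by
  have := tilt_denom_pos hc hδ0 hδ1
  have : 1 - δ ≠ 0 := by linarith
  rw [one_sub_tilt hc hδ0 hδ1]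
  field_simp

lemma mul_log_sub_klBer_tilt (hc : 0 < c) (hδ0 : 0 < δ) (hδ1 : δ < 1) :
    c * δ / (1 + δ * (c - 1)) * log c - klBer (c * δ / (1 + δ * (c - 1))) δ
      = log (1 + (c - 1) * δ) := by
  have hS := tilt_denom_pos hc hδ0 hδ1
  have hδ1' : 1 - δ ≠ 0 := by linarith
  have hκδ : c * δ / (1 + δ * (c - 1)) / δ = c / (1 + δ * (c - 1)) := by
    field_simp
  have hκδ' : (1 - c * δ / (1 + δ * (c - 1))) / (1 - δ) = 1 / (1 + δ * (c - 1)) := by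
    rw [one_sub_tilt hc hδ0 hδ1]
    field_simp
  rw [klBer, hκδ, hκδ', log_div hc.ne' hS.ne', log_div one_ne_zero hS.ne', log_one,
    mul_comm (c - 1)]
  ring

end Tilt

lemma lt_odds_ratio_of_klBer_eq {p δ c : ℝ} (hδ0 : 0 < δ) (hδp : δ < p) (hp1 : p < 1)
    (hc : 0 < c) (h : klBer p δ = p * log c) : c < p / (1 - p) * ((1 - δ) / δ) := by
  have hp0 : 0 < p := hδ0.trans hδp
  have hp1' : 0 < 1 - p := sub_pos.2 hp1
  have hδ1 : 0 < 1 - δ := by linarith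
  set B := log ((1 - δ) / (1 - p)) with hB_def
  have hB : 0 < B := log_pos ((one_lt_div hp1').2 (by linarith))
  have hinv : log ((1 - p) / (1 - δ)) = -B := by
    rw [hB_def, ← log_inv, inv_div]
  have hsplit : log (p / (1 - p) * ((1 - δ) / δ)) = log (p / δ) + B := by
    rw [hB_def, ← log_mul (by positivity) (by positivity)]
    congr 1
    field_simp
  have hgap : p * (log (p / δ) + B - log c) = B := by
    rw [klBer, hinv] at h
    linear_combination h
  rw [← log_lt_log_iff hc (by positivity), hsplit]
  linarith [pos_of_mul_pos_right (hgap ▸ hB) hp0.le]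

theorem stmt19 (α c δs : ℝ) (hα : 1 < α) (hc : 1 < c)
    (hδ0 : 0 < δs) (hδ1 : δs < 1 / α)
    (hδ : klBer (1 / α) δs = Real.log c / α) :
    ∀ κs : ℝ, κs = c * δs / (1 + δs * (c - 1)) →
      δs < κs ∧ κs < 1 / α ∧
      Real.log c = Real.log ((κs / (1 - κs)) * ((1 - δs) / δs)) ∧
      κs * Real.log c - klBer κs δs = Real.log (1 + (c - 1) * δs) := by
  rintro κs rfl
  have hc0 : 0 < c := one_pos.trans hc
  have hp1 : 1 / α < 1 := (div_lt_one (one_pos.trans hα)).2 hα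
  have hδ1' : δs < 1 := hδ1.trans hp1
  have hδ' : klBer (1 / α) δs = 1 / α * log c := by rw [hδ]; ring
  refine ⟨lt_tilt hc hδ0 hδ1', ?_, ?_, mul_log_sub_klBer_tilt hc0 hδ0 hδ1'⟩
  · exact (tilt_lt_iff hc0 hδ0 hδ1' hp1).2 (lt_odds_ratio_of_klBer_eq hδ0 hδ1 hp1 hc0 hδ')
  · rw [tilt_odds_mul_inv_odds hc0 hδ0 hδ1']
end
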